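/- For a nontrivial finite cyclic group G of order n with generator set S, the Gutman index of the generator graph satisfies Gut(Γ(G)) = (1/2)|S|(|S|−1)(n−1)² + |S|²(n−|S|)(2n−|S|−2). -/

import Mathlib

/-- The generator graph of a group: vertices are group elements, two distinct
vertices are adjacent iff at least one of them generates the group. -/
def genGraph (G : Type*) [Group G] : SimpleGraph G where
  Adj x y := x ≠ y ∧ (Subgroup.zpowers x = ⊤ ∨ Subgroup.zpowers y = ⊤)
  symm := by
    constructor
    intro x y h
    exact ⟨h.1.symm, h.2.symm⟩
  loopless := by
    constructor
    intro x h
    exact h.1 rfl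

noncomputable instance {G : Type*} [Group G] [Fintype G] (x : G) :
    Fintype ((genGraph G).neighborSet x) := Fintype.ofFinite _

-- The set of generators of `G`, as a finset.
open Classical in
noncomputable def gens (G : Type*) [Group G] [Fintype G] : Finset G :=
  Finset.univ.filter fun x => Subgroup.zpowers x = ⊤

/-- The Gutman index: the sum of `deg u * deg v * d(u,v)` over all unordered
pairs of distinct vertices (computed as half the sum over ordered pairs). -/
noncomputable def gutman {V : Type*} [Fintype V] (Γ : SimpleGraph V)
    [∀ v, Fintype (Γ.neighborSet v)] : ℝ :=
  (∑ u : V, ∑ v : V, (Γ.degree u : ℝ) * (Γ.degree v : ℝ) * (Γ.dist u v : ℝ)) / 2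


open Classical Finset

lemma mem_gens_iff {G : Type*} [Group G] [Fintype G] {x : G} :
    x ∈ gens G ↔ Subgroup.zpowers x = ⊤ := by
  simp [gens]

lemma neighborFinset_gen {G : Type*} [Group G] [Fintype G] {x : G} (hx : x ∈ gens G) :
    (genGraph G).neighborFinset x = univ.erase x := by
  ext y
  rw [SimpleGraph.mem_neighborFinset]
  simp only [SimpleGraph.mem_neighborFinset, genGraph, mem_erase, mem_univ, and_true]
  constructor
  · rintro ⟨h, -⟩; exact h.symm
  · intro h; exact ⟨Ne.symm h, Or.inl (mem_gens_iff.mp hx)⟩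

lemma degree_gen {G : Type*} [Group G] [Fintype G] {x : G} (hx : x ∈ gens G) :
    (genGraph G).degree x = Fintype.card G - 1 := by
  rw [← SimpleGraph.card_neighborFinset_eq_degree, neighborFinset_gen hx,
    card_erase_of_mem (mem_univ x), card_univ]

lemma neighborFinset_nongen {G : Type*} [Group G] [Fintype G] {x : G} (hx : x ∉ gens G) :
    (genGraph G).neighborFinset x = gens G := by
  ext y
  rw [SimpleGraph.mem_neighborFinset]
  simp only [SimpleGraph.mem_neighborFinset, genGraph]
  constructor
  · rintro ⟨h, hg | hg⟩
    · exact absurd (mem_gens_iff.mpr hg) hx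
    · exact mem_gens_iff.mpr hg
  · intro h
    refine ⟨fun he => hx (he ▸ h), Or.inr (mem_gens_iff.mp h)⟩

lemma degree_nongen {G : Type*} [Group G] [Fintype G] {x : G} (hx : x ∉ gens G) :
    (genGraph G).degree x = (gens G).card := by
  rw [← SimpleGraph.card_neighborFinset_eq_degree, neighborFinset_nongen hx]

lemma gens_nonempty {G : Type*} [Group G] [Fintype G] [IsCyclic G] :
    (gens G).Nonempty := by
  obtain ⟨g, hg⟩ := IsCyclic.exists_generator (α := G)
  exact ⟨g, mem_gens_iff.mpr ((Subgroup.eq_top_iff' _).mpr hg)⟩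

lemma adj_of_gen_left {G : Type*} [Group G] [Fintype G] {x y : G} (hx : x ∈ gens G)
    (hxy : x ≠ y) : (genGraph G).Adj x y :=
  ⟨hxy, Or.inl (mem_gens_iff.mp hx)⟩

lemma adj_of_gen_right {G : Type*} [Group G] [Fintype G] {x y : G} (hy : y ∈ gens G)
    (hxy : x ≠ y) : (genGraph G).Adj x y :=
  ⟨hxy, Or.inr (mem_gens_iff.mp hy)⟩

lemma dist_nongen {G : Type*} [Group G] [Fintype G] [IsCyclic G] {x y : G}
    (hx : x ∉ gens G) (hy : y ∉ gens G) (hxy : x ≠ y) :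
    (genGraph G).dist x y = 2 := by
  obtain ⟨g, hg⟩ := gens_nonempty (G := G)
  have hgx : g ≠ x := fun h => hx (h ▸ hg)
  have hgy : g ≠ y := fun h => hy (h ▸ hg)
  have a1 : (genGraph G).Adj x g := adj_of_gen_right hg hgx.symm
  have a2 : (genGraph G).Adj g y := adj_of_gen_left hg hgy
  have hle : (genGraph G).dist x y ≤ 2 := by
    simpa using SimpleGraph.dist_le
      (SimpleGraph.Walk.cons a1 (SimpleGraph.Walk.cons a2 SimpleGraph.Walk.nil))
  have hne1 : (genGraph G).dist x y ≠ 1 := by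
    intro h1
    rcases (SimpleGraph.dist_eq_one_iff_adj.mp h1).2 with hg1 | hg1
    · exact hx (mem_gens_iff.mpr hg1)
    · exact hy (mem_gens_iff.mpr hg1)
  have hr : (genGraph G).Reachable x y :=
    ⟨SimpleGraph.Walk.cons a1 (SimpleGraph.Walk.cons a2 SimpleGraph.Walk.nil)⟩
  have hpos : 0 < (genGraph G).dist x y := hr.pos_dist_of_ne hxy
  omega

theorem stmt13 {G : Type*} [Group G] [Fintype G] [IsCyclic G] [Nontrivial G] :
    gutman (genGraph G) =
      (1 / 2) * ((gens G).card : ℝ) * (((gens G).card : ℝ) - 1)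
          * ((Fintype.card G : ℝ) - 1) ^ 2
        + ((gens G).card : ℝ) ^ 2 * ((Fintype.card G : ℝ) - ((gens G).card : ℝ))
          * (2 * (Fintype.card G : ℝ) - ((gens G).card : ℝ) - 2) := by
  classical
  have hn2 : 2 ≤ Fintype.card G := Fintype.one_lt_card
  have hk1 : 1 ≤ (gens G).card := card_pos.mpr gens_nonempty
  have hkn : (gens G).card ≤ Fintype.card G := by
    rw [← card_univ]; exact card_le_card (subset_univ _)
  have hdg : ∀ x ∈ gens G, ((genGraph G).degree x : ℝ) = (Fintype.card G : ℝ) - 1 := by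
    intro x hx
    rw [degree_gen hx, Nat.cast_sub (by omega), Nat.cast_one]
  have hdn : ∀ x ∉ gens G, ((genGraph G).degree x : ℝ) = ((gens G).card : ℝ) := by
    intro x hx
    rw [degree_nongen hx]
  set f : G → G → ℝ := fun u v =>
    ((genGraph G).degree u : ℝ) * ((genGraph G).degree v : ℝ) * ((genGraph G).dist u v : ℝ)
    with hf
  have hdiag : ∀ u : G, f u u = 0 := by
    intro u; simp [hf, SimpleGraph.dist_self]
  have hdist1 : ∀ u v : G, u ≠ v → (u ∈ gens G ∨ v ∈ gens G) →
      ((genGraph G).dist u v : ℝ) = 1 := by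
    intro u v huv h
    have hadj : (genGraph G).Adj u v := by
      rcases h with h | h
      · exact adj_of_gen_left h huv
      · exact adj_of_gen_right h huv
    rw [SimpleGraph.dist_eq_one_iff_adj.mpr hadj]
    norm_num
  have hnk : ((Fintype.card G - (gens G).card : ℕ) : ℝ)
      = (Fintype.card G : ℝ) - ((gens G).card : ℝ) := Nat.cast_sub hkn
  have hA : ∑ u ∈ gens G, ∑ v ∈ gens G, f u v
      = ((gens G).card : ℝ) * ((((gens G).card : ℝ) - 1)
        * (((Fintype.card G : ℝ) - 1) * ((Fintype.card G : ℝ) - 1))) := by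
    rw [Finset.sum_congr rfl (fun u hu => ?_), Finset.sum_const, nsmul_eq_mul]
    rw [← Finset.sum_erase_add (gens G) _ hu, hdiag, add_zero]
    rw [Finset.sum_congr rfl (fun v hv => ?_), Finset.sum_const, nsmul_eq_mul,
      card_erase_of_mem hu, Nat.cast_sub hk1, Nat.cast_one]
    rw [hf]
    simp only
    rw [hdg u hu, hdg v (mem_of_mem_erase hv),
      hdist1 u v (fun h => (mem_erase.mp hv).1 h.symm) (Or.inl hu), mul_one]
  have hB : ∑ u ∈ gens G, ∑ v ∈ (gens G)ᶜ, f u v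
      = ((gens G).card : ℝ) * (((Fintype.card G : ℝ) - ((gens G).card : ℝ))
        * ((((Fintype.card G : ℝ) - 1) * ((gens G).card : ℝ)))) := by
    rw [Finset.sum_congr rfl (fun u hu => ?_), Finset.sum_const, nsmul_eq_mul]
    rw [Finset.sum_congr rfl (fun v hv => ?_), Finset.sum_const, nsmul_eq_mul,
      card_compl, hnk]
    rw [hf]
    simp only
    have hv' := mem_compl.mp hv
    have huv : u ≠ v := fun h => hv' (h ▸ hu)
    rw [hdg u hu, hdn v hv', hdist1 u v huv (Or.inl hu), mul_one]
  have hC : ∑ u ∈ (gens G)ᶜ, ∑ v ∈ gens G, f u v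
      = ((Fintype.card G : ℝ) - ((gens G).card : ℝ)) * (((gens G).card : ℝ)
        * (((gens G).card : ℝ) * ((Fintype.card G : ℝ) - 1))) := by
    rw [Finset.sum_congr rfl (fun u hu => ?_), Finset.sum_const, nsmul_eq_mul,
      card_compl, hnk]
    rw [Finset.sum_congr rfl (fun v hv => ?_), Finset.sum_const, nsmul_eq_mul]
    rw [hf]
    simp only
    have hu' := mem_compl.mp hu
    have huv : u ≠ v := fun h => hu' (h ▸ hv)
    rw [hdn u hu', hdg v hv, hdist1 u v huv (Or.inr hv), mul_one]
  have hD : ∑ u ∈ (gens G)ᶜ, ∑ v ∈ (gens G)ᶜ, f u v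
      = ((Fintype.card G : ℝ) - ((gens G).card : ℝ))
        * ((((Fintype.card G : ℝ) - ((gens G).card : ℝ)) - 1)
          * (((gens G).card : ℝ) * ((gens G).card : ℝ) * 2)) := by
    rw [Finset.sum_congr rfl (fun u hu => ?_), Finset.sum_const, nsmul_eq_mul,
      card_compl, hnk]
    have h1 : 1 ≤ ((gens G)ᶜ : Finset G).card := card_pos.mpr ⟨u, hu⟩
    rw [← Finset.sum_erase_add ((gens G)ᶜ) _ hu, hdiag, add_zero]
    rw [Finset.sum_congr rfl (fun v hv => ?_), Finset.sum_const, nsmul_eq_mul,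
      card_erase_of_mem hu, card_compl, Nat.cast_sub (by rw [card_compl] at h1; omega),
      Nat.cast_sub hkn, Nat.cast_one]
    have hu' := mem_compl.mp hu
    have hv' := mem_compl.mp (mem_of_mem_erase hv)
    have huv : u ≠ v := fun h => (mem_erase.mp hv).1 h.symm
    rw [hf]
    simp only
    rw [hdn u hu', hdn v hv', dist_nongen hu' hv' huv]
    norm_num
  have key : ∑ u : G, ∑ v : G, f u v
      = (∑ u ∈ gens G, ∑ v ∈ gens G, f u v) + (∑ u ∈ gens G, ∑ v ∈ (gens G)ᶜ, f u v)
        + ((∑ u ∈ (gens G)ᶜ, ∑ v ∈ gens G, f u v)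
          + (∑ u ∈ (gens G)ᶜ, ∑ v ∈ (gens G)ᶜ, f u v)) := by
    rw [← Finset.sum_add_sum_compl (gens G) (fun u => ∑ v : G, f u v)]
    congr 1
    · rw [← Finset.sum_add_distrib]
      exact Finset.sum_congr rfl fun u _ => (Finset.sum_add_sum_compl (gens G) (f u)).symm
    · rw [← Finset.sum_add_distrib]
      exact Finset.sum_congr rfl fun u _ => (Finset.sum_add_sum_compl (gens G) (f u)).symm
  have hg : gutman (genGraph G) = (∑ u : G, ∑ v : G, f u v) / 2 := rfl
  rw [hg, key, hA, hB, hC, hD]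
  ring
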